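/- (Apolarity Lemma, reduced case.) Let k be a field of characteristic 0 or characteristic > d, let F ∈ k[x₁,…,x_n] be homogeneous of degree d, and let ℓ₁,…,ℓ_r be nonzero, pairwise non-proportional linear forms with coefficient vectors a₁,…,a_r ∈ k^n. Then F lies in the k-linear span of ℓ₁^d,…,ℓ_r^d if and only if every homogeneous polynomial θ ∈ k[y₁,…,y_n] that vanishes at each of the points a₁,…,a_r satisfies θ ∘ F = 0, i.e. the homogeneous vanishing ideal of the points {a₁,…,a_r} is contained in the apolar ideal F^⊥. -/

import Mathlib

open MvPolynomial

/-- The linear form with coefficient vector `a`. -/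
noncomputable def linForm {k : Type*} [CommRing k] {n : Type*} [Fintype n]
    (a : n → k) : MvPolynomial n k :=
  ∑ i, C (a i) * X i

/-- The apolarity action: `diffAction θ F` is the result `θ ∘ F` of applying the
constant-coefficient differential operator obtained from `θ` by substituting
`y_i ↦ ∂/∂x_i` to the polynomial `F`. -/
noncomputable def diffAction {k : Type*} [CommSemiring k] {σ : Type*}
    (θ F : MvPolynomial σ k) : MvPolynomial σ k :=
  ∑ a ∈ θ.support, ∑ b ∈ F.support,
    monomial (b - a) (θ.coeff a * F.coeff b * ∏ i ∈ a.support, ((b i).descFactorial (a i) : k))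


/-!
Substituting `∂/∂xᵢ` for `yᵢ` is multiplicative (`diffAction_mul`) and sends `yᵢ` to `∂/∂xᵢ`,
so a form `θ` of degree `e` acts on powers of `ℓ = linForm a` by the power rule
`θ ∘ ℓ^d = d (d - 1) ⋯ (d - e + 1) θ(a) ℓ^(d - e)`. This gives the forward direction at once.

For the converse, pair forms of degree `d` by `⟨θ, G⟩ = θ ∘ G`. Monomials pair diagonally with
weights `m! ∣ d!`, so the pairing is perfect when `d! ≠ 0`, and `⟨θ, ℓ^d⟩ = d! θ(a)`. Hence
the degree-`d` forms orthogonal to every `ℓᵢ^d` are exactly those vanishing at every `aᵢ`, and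
`F`, being orthogonal to all of them, lies in the double annihilator `span {ℓᵢ^d}`.
-/

open scoped Nat

theorem Nat.descFactorial_add (n a b : ℕ) :
    n.descFactorial (a + b) = n.descFactorial a * (n - a).descFactorial b := by
  simpa [mul_comm] using (Nat.descFactorial_mul_descFactorial (Nat.le_add_right a b)).symm

theorem Finsupp.eq_of_le_of_degree_eq {σ : Type*} {m m' : σ →₀ ℕ} (hle : m ≤ m')
    (h : m.degree = m'.degree) : m = m' := by
  have hdiff : (m' - m).degree = 0 := by
    have := congrArg Finsupp.degree (add_tsub_cancel_of_le hle)
    rw [map_add] at this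
    omega
  rw [Finsupp.degree_eq_zero_iff, tsub_eq_zero_iff_le] at hdiff
  exact le_antisymm hle hdiff

theorem natCast_factorial_ne_zero {k : Type*} [Field k] {d : ℕ}
    (hchar : ringChar k = 0 ∨ d < ringChar k) : (d ! : k) ≠ 0 := by
  rw [Ne, CharP.cast_eq_zero_iff k (ringChar k)]
  rcases hchar with h | h
  · simp [h, Nat.factorial_ne_zero]
  · have hp : (ringChar k).Prime :=
      (CharP.char_is_prime_or_zero k (ringChar k)).resolve_right (by omega)
    rw [hp.dvd_factorial]
    omega

theorem mem_span_range_of_forall_dual_apply_eq_zero {K V ι : Type*} [Field K] [AddCommGroup V]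
    [Module K V] [FiniteDimensional K V] {B : V →ₗ[K] Module.Dual K V}
    (hB : Function.Injective B) {v : ι → V} {x : V}
    (h : ∀ w, (∀ i, B w (v i) = 0) → B w x = 0) : x ∈ Submodule.span K (Set.range v) := by
  have hsurj := (LinearMap.injective_iff_surjective_of_finrank_eq_finrank
    Subspace.dual_finrank_eq.symm).mp hB
  rw [← Subspace.forall_mem_dualAnnihilator_apply_eq_zero_iff]
  intro f hf
  obtain ⟨w, rfl⟩ := hsurj f
  exact h w fun i => (Submodule.mem_dualAnnihilator _).mp hf _ (Submodule.subset_span ⟨i, rfl⟩)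

section DiffAction

variable {k : Type*} [CommSemiring k] {σ : Type*}

theorem diffAction_eq_sum (θ F : MvPolynomial σ k) {s t : Finset (σ →₀ ℕ)}
    (hs : θ.support ⊆ s) (ht : F.support ⊆ t) :
    diffAction θ F = ∑ a ∈ s, ∑ b ∈ t,
      monomial (b - a) (θ.coeff a * F.coeff b *
        ∏ i ∈ a.support, ((b i).descFactorial (a i) : k)) := by
  rw [diffAction, Finset.sum_subset hs fun a _ ha => by simp [notMem_support_iff.mp ha]]
  refine Finset.sum_congr rfl fun a _ => Finset.sum_subset ht fun b _ hb => ?_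
  simp [notMem_support_iff.mp hb]

theorem diffAction_monomial_monomial (m b : σ →₀ ℕ) (c e : k) {s : Finset σ}
    (hs : m.support ⊆ s) :
    diffAction (monomial m c) (monomial b e) =
      monomial (b - m) (c * e * ∏ i ∈ s, ((b i).descFactorial (m i) : k)) := by
  classical
  rw [diffAction_eq_sum _ _ support_monomial_subset support_monomial_subset,
    Finset.sum_singleton, Finset.sum_singleton, coeff_monomial, if_pos rfl, coeff_monomial,
    if_pos rfl, Finset.prod_subset hs fun i _ hi => by simp [Finsupp.notMem_support_iff.mp hi]]

theorem diffAction_add_left (θ ψ F : MvPolynomial σ k) :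
    diffAction (θ + ψ) F = diffAction θ F + diffAction ψ F := by
  classical
  rw [diffAction_eq_sum (θ + ψ) F Finsupp.support_add le_rfl,
    diffAction_eq_sum θ F Finset.subset_union_left le_rfl,
    diffAction_eq_sum ψ F Finset.subset_union_right le_rfl, ← Finset.sum_add_distrib]
  refine Finset.sum_congr rfl fun a _ => ?_
  rw [← Finset.sum_add_distrib]
  refine Finset.sum_congr rfl fun b _ => ?_
  rw [coeff_add, add_mul, add_mul, map_add]

theorem diffAction_add_right (θ F G : MvPolynomial σ k) :
    diffAction θ (F + G) = diffAction θ F + diffAction θ G := by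
  classical
  rw [diffAction_eq_sum θ (F + G) le_rfl Finsupp.support_add,
    diffAction_eq_sum θ F le_rfl Finset.subset_union_left,
    diffAction_eq_sum θ G le_rfl Finset.subset_union_right, ← Finset.sum_add_distrib]
  refine Finset.sum_congr rfl fun a _ => ?_
  rw [← Finset.sum_add_distrib]
  refine Finset.sum_congr rfl fun b _ => ?_
  rw [coeff_add, mul_add, add_mul, map_add]

theorem diffAction_smul_left (c : k) (θ F : MvPolynomial σ k) :
    diffAction (c • θ) F = c • diffAction θ F := by
  simp only [diffAction_eq_sum (c • θ) F support_smul le_rfl,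
    diffAction_eq_sum θ F le_rfl le_rfl, Finset.smul_sum, smul_monomial, coeff_smul,
    smul_eq_mul, mul_assoc]

theorem diffAction_smul_right (c : k) (θ F : MvPolynomial σ k) :
    diffAction θ (c • F) = c • diffAction θ F := by
  simp only [diffAction_eq_sum θ (c • F) le_rfl support_smul,
    diffAction_eq_sum θ F le_rfl le_rfl, Finset.smul_sum, smul_monomial, coeff_smul,
    smul_eq_mul, mul_assoc, mul_left_comm c]

variable (k σ) in
noncomputable def diffActionBilin :
    MvPolynomial σ k →ₗ[k] MvPolynomial σ k →ₗ[k] MvPolynomial σ k :=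
  LinearMap.mk₂ k diffAction diffAction_add_left diffAction_smul_left
    diffAction_add_right diffAction_smul_right

@[simp] theorem diffActionBilin_apply (θ F : MvPolynomial σ k) :
    diffActionBilin k σ θ F = diffAction θ F := rfl

theorem diffAction_C (c : k) (F : MvPolynomial σ k) : diffAction (C c) F = c • F := by
  induction F using MvPolynomial.induction_on' with
  | add F G hF hG => rw [diffAction_add_right, hF, hG, smul_add]
  | monomial b e =>
    rw [← monomial_zero', diffAction_monomial_monomial _ _ _ _ (Finset.empty_subset _),
      tsub_zero, Finset.prod_empty, mul_one, smul_monomial, smul_eq_mul]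

theorem diffAction_one (F : MvPolynomial σ k) : diffAction 1 F = F := by
  rw [← C_1, diffAction_C, one_smul]

theorem diffAction_X (i : σ) (F : MvPolynomial σ k) : diffAction (X i) F = pderiv i F := by
  induction F using MvPolynomial.induction_on' with
  | add F G hF hG => rw [diffAction_add_right, hF, hG, map_add]
  | monomial b e =>
    rw [X, diffAction_monomial_monomial _ _ _ _ Finsupp.support_single_subset, pderiv_monomial,
      Finset.prod_singleton, Finsupp.single_eq_same, Nat.descFactorial_one, one_mul]

theorem diffAction_mul (θ ψ F : MvPolynomial σ k) :
    diffAction (θ * ψ) F = diffAction θ (diffAction ψ F) := by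
  classical
  induction θ using MvPolynomial.induction_on' with
  | add θ₁ θ₂ h₁ h₂ => rw [add_mul, diffAction_add_left, h₁, h₂, diffAction_add_left]
  | monomial m₁ c₁ =>
    induction ψ using MvPolynomial.induction_on' with
    | add ψ₁ ψ₂ h₁ h₂ =>
      rw [mul_add, diffAction_add_left, h₁, h₂, diffAction_add_left, diffAction_add_right]
    | monomial m₂ c₂ =>
      induction F using MvPolynomial.induction_on' with
      | add F₁ F₂ h₁ h₂ =>
        rw [diffAction_add_right, h₁, h₂, diffAction_add_right, diffAction_add_right]
      | monomial b e =>
        set s := m₁.support ∪ m₂.support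
        rw [monomial_mul, diffAction_monomial_monomial _ _ _ _ (Finsupp.support_add : _ ⊆ s),
          diffAction_monomial_monomial _ _ _ _ (Finset.subset_union_right : _ ⊆ s),
          diffAction_monomial_monomial _ _ _ _ (Finset.subset_union_left : _ ⊆ s),
          add_comm m₁, ← tsub_tsub]
        congr 1
        simp only [Finsupp.coe_add, Pi.add_apply, Finsupp.coe_tsub, Pi.sub_apply,
          Nat.descFactorial_add, Nat.cast_mul, Finset.prod_mul_distrib]
        ring

end DiffAction

section PowerRule

variable {k : Type*} [CommRing k] {σ : Type*} [Fintype σ]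

theorem isHomogeneous_linForm (a : σ → k) : (linForm a).IsHomogeneous 1 :=
  IsHomogeneous.sum _ _ _ fun i _ => isHomogeneous_C_mul_X (a i) i

theorem isHomogeneous_linForm_pow (a : σ → k) (d : ℕ) : (linForm a ^ d).IsHomogeneous d := by
  simpa using (isHomogeneous_linForm a).pow d

theorem pderiv_linForm (a : σ → k) (i : σ) : pderiv i (linForm a) = C (a i) := by
  classical
  simp [linForm, pderiv_X, Pi.single_apply]

def SatisfiesPowerRule (a : σ → k) (θ : MvPolynomial σ k) (e : ℕ) : Prop :=
  ∀ d, diffAction θ (linForm a ^ d) =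
    C ((d.descFactorial e : k) * eval a θ) * linForm a ^ (d - e)

variable {a : σ → k}

theorem satisfiesPowerRule_zero (e : ℕ) : SatisfiesPowerRule a 0 e := fun d => by
  simp [diffAction]

theorem satisfiesPowerRule_one : SatisfiesPowerRule a 1 0 := fun d => by
  simp [diffAction_one]

theorem satisfiesPowerRule_X (i : σ) : SatisfiesPowerRule a (X i) 1 := fun d => by
  rw [diffAction_X, Derivation.leibniz_pow, pderiv_linForm, Nat.descFactorial_one, eval_X,
    nsmul_eq_mul, smul_eq_mul, map_mul, map_natCast]
  ring

theorem SatisfiesPowerRule.mul {θ ψ : MvPolynomial σ k} {e f : ℕ} (hθ : SatisfiesPowerRule a θ e)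
    (hψ : SatisfiesPowerRule a ψ f) : SatisfiesPowerRule a (θ * ψ) (e + f) := fun d => by
  rw [diffAction_mul, hψ, ← smul_eq_C_mul, diffAction_smul_right, hθ, smul_eq_C_mul, add_comm e,
    Nat.descFactorial_add, Nat.sub_sub, eval_mul, ← mul_assoc, ← map_mul]
  congr 2
  push_cast
  ring

theorem SatisfiesPowerRule.pow {θ : MvPolynomial σ k} {e : ℕ} (hθ : SatisfiesPowerRule a θ e)
    (j : ℕ) : SatisfiesPowerRule a (θ ^ j) (j * e) := by
  induction j with
  | zero => simpa using satisfiesPowerRule_one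
  | succ j ih => simpa [pow_succ, add_mul] using ih.mul hθ

theorem SatisfiesPowerRule.smul {θ : MvPolynomial σ k} {e : ℕ} (hθ : SatisfiesPowerRule a θ e)
    (c : k) : SatisfiesPowerRule a (c • θ) e := fun d => by
  rw [diffAction_smul_left, hθ, smul_eq_C_mul, ← mul_assoc, ← map_mul, smul_eval]
  ring_nf

theorem SatisfiesPowerRule.add {θ ψ : MvPolynomial σ k} {e : ℕ} (hθ : SatisfiesPowerRule a θ e)
    (hψ : SatisfiesPowerRule a ψ e) : SatisfiesPowerRule a (θ + ψ) e := fun d => by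
  rw [diffAction_add_left, hθ, hψ, eval_add, mul_add, map_add, add_mul]

theorem satisfiesPowerRule_monomial (m : σ →₀ ℕ) (c : k) :
    SatisfiesPowerRule a (monomial m c) m.degree := by
  rw [← mul_one c, ← smul_eq_mul, ← smul_monomial]
  refine SatisfiesPowerRule.smul ?_ c
  induction m using Finsupp.induction with
  | zero => simpa using satisfiesPowerRule_one
  | single_add i j m _ _ ih =>
    rw [monomial_single_add, map_add, Finsupp.degree_single]
    simpa using ((satisfiesPowerRule_X i).pow j).mul ih

theorem SatisfiesPowerRule.of_isHomogeneous {θ : MvPolynomial σ k} {e : ℕ}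
    (hθ : θ.IsHomogeneous e) : SatisfiesPowerRule a θ e := by
  rw [θ.as_sum]
  refine Finset.sum_induction _ (SatisfiesPowerRule a · e) (fun _ _ => .add) ?_ fun m hm => ?_
  · exact satisfiesPowerRule_zero e
  · have hm : m.degree = e := by_contra fun h => mem_support_iff.mp hm (hθ.coeff_eq_zero h)
    exact hm ▸ satisfiesPowerRule_monomial m _

end PowerRule

section Pairing

variable {k : Type*} [Field k] {σ : Type*}

theorem coeff_zero_diffAction_monomial {θ : MvPolynomial σ k} {m : σ →₀ ℕ}
    (hθ : θ.IsHomogeneous m.degree) :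
    coeff 0 (diffAction θ (monomial m 1)) = coeff m θ * ∏ i ∈ m.support, ((m i)! : k) := by
  classical
  rw [diffAction_eq_sum θ _ (Finset.subset_union_left (s₂ := {m})) support_monomial_subset]
  simp only [Finset.sum_singleton]
  rw [coeff_sum,
    Finset.sum_eq_single_of_mem m (Finset.mem_union_right _ (Finset.mem_singleton_self m))]
  · rw [coeff_monomial, if_pos (tsub_self m), coeff_monomial, if_pos rfl, mul_one]
    simp_rw [Nat.descFactorial_self]
  · intro m' _ hm'
    by_cases hc : coeff m' θ = 0
    · simp [hc]
    · have hdeg : m'.degree = m.degree := by_contra fun h => hc (hθ.coeff_eq_zero h)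
      have hnle : ¬ m ≤ m' := fun hle => hm' (Finsupp.eq_of_le_of_degree_eq hle hdeg.symm).symm
      rw [coeff_monomial, if_neg (by rwa [tsub_eq_zero_iff_le])]

instance [Finite σ] (d : ℕ) : FiniteDimensional k (homogeneousSubmodule σ k d) :=
  Module.Finite.iff_fg.mpr (homogeneousSubmodule_fg σ k d)

-- Two forms of degree `d` pair to the constant `θ ∘ G`, read off as its constant coefficient.
variable (k σ) in
noncomputable def apolarPairing (d : ℕ) :
    homogeneousSubmodule σ k d →ₗ[k] Module.Dual k (homogeneousSubmodule σ k d) :=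
  ((diffActionBilin k σ).compr₂ (lcoeff k 0)).domRestrict₁₂ _ _

theorem apolarPairing_apply {d : ℕ} (θ G : homogeneousSubmodule σ k d) :
    apolarPairing k σ d θ G = coeff 0 (diffAction (θ : MvPolynomial σ k) G) := rfl

theorem apolarPairing_injective {d : ℕ} (hd : (d ! : k) ≠ 0) :
    Function.Injective (apolarPairing k σ d) := by
  rw [injective_iff_map_eq_zero]
  intro θ hθ
  by_contra hne
  obtain ⟨m, hm⟩ := ne_zero_iff.mp (Subtype.coe_ne_coe.mpr hne)
  have hdeg : m.degree = d := by_contra fun h => hm (θ.2.coeff_eq_zero h)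
  have hpair := LinearMap.congr_fun hθ ⟨monomial m 1, isHomogeneous_monomial 1 hdeg⟩
  rw [apolarPairing_apply, LinearMap.zero_apply, coeff_zero_diffAction_monomial (hdeg ▸ θ.2)]
    at hpair
  have hfact : (∏ i ∈ m.support, ((m i)! : k)) ≠ 0 := by
    rw [← Nat.cast_prod]
    refine fun h0 => hd (?_ : ((d ! : ℕ) : k) = 0)
    rw [← hdeg]
    exact zero_dvd_iff.mp (h0 ▸ Nat.cast_dvd_cast (Nat.prod_factorial_dvd_factorial_sum _ _))
  exact hm ((mul_eq_zero.mp hpair).resolve_right hfact)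

theorem apolarPairing_linForm_pow [Fintype σ] {d : ℕ} (a : σ → k)
    (θ : homogeneousSubmodule σ k d) :
    apolarPairing k σ d θ ⟨linForm a ^ d, isHomogeneous_linForm_pow a d⟩ =
      d ! * eval a (θ : MvPolynomial σ k) := by
  rw [apolarPairing_apply, SatisfiesPowerRule.of_isHomogeneous θ.2 d, Nat.descFactorial_self,
    Nat.sub_self, pow_zero, mul_one, coeff_zero_C]

end Pairing

section Apolarity

variable {k : Type*} [Field k] {σ ι : Type*} [Fintype σ] {d : ℕ}

theorem diffAction_eq_zero_of_mem_span_linForm_pow {a : ι → σ → k} {θ F : MvPolynomial σ k}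
    {e : ℕ} (hθ : θ.IsHomogeneous e) (hvan : ∀ i, eval (a i) θ = 0)
    (hF : F ∈ Submodule.span k (Set.range fun i => linForm (a i) ^ d)) :
    diffAction θ F = 0 := by
  have hker : Submodule.span k (Set.range fun i => linForm (a i) ^ d) ≤
      LinearMap.ker (diffActionBilin k σ θ) := by
    rw [Submodule.span_le]
    rintro _ ⟨i, rfl⟩
    simp [SatisfiesPowerRule.of_isHomogeneous hθ d, hvan i]
  exact hker hF

theorem mem_span_linForm_pow_of_forall_diffAction_eq_zero (hd : (d ! : k) ≠ 0)
    {a : ι → σ → k} {F : MvPolynomial σ k} (hF : F.IsHomogeneous d)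
    (H : ∀ θ : MvPolynomial σ k, θ.IsHomogeneous d → (∀ i, eval (a i) θ = 0) →
      diffAction θ F = 0) :
    F ∈ Submodule.span k (Set.range fun i => linForm (a i) ^ d) := by
  let ℓ : ι → homogeneousSubmodule σ k d := fun i =>
    ⟨linForm (a i) ^ d, isHomogeneous_linForm_pow (a i) d⟩
  have hmem : (⟨F, hF⟩ : homogeneousSubmodule σ k d) ∈ Submodule.span k (Set.range ℓ) := by
    refine mem_span_range_of_forall_dual_apply_eq_zero (apolarPairing_injective hd)
      fun θ hθ => ?_
    have hvan : ∀ i, eval (a i) (θ : MvPolynomial σ k) = 0 := fun i =>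
      (mul_eq_zero.mp ((apolarPairing_linForm_pow (a i) θ).symm.trans (hθ i))).resolve_left hd
    rw [apolarPairing_apply, H θ θ.2 hvan, coeff_zero]
  have h := Submodule.apply_mem_span_image_of_mem_span (homogeneousSubmodule σ k d).subtype hmem
  rw [← Set.range_comp] at h
  exact h

end Apolarity

theorem apolarity_lemma_general {k : Type*} [Field k] {n d r : ℕ}
    (hchar : ringChar k = 0 ∨ d < ringChar k)
    (F : MvPolynomial (Fin n) k) (hF : F.IsHomogeneous d)
    (a : Fin r → Fin n → k) :
    F ∈ Submodule.span k (Set.range fun i => linForm (a i) ^ d) ↔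
      ∀ θ : MvPolynomial (Fin n) k, (∃ e, θ.IsHomogeneous e) →
        (∀ i, eval (a i) θ = 0) → diffAction θ F = 0 :=
  ⟨fun hspan _ ⟨_, hθ⟩ hvan => diffAction_eq_zero_of_mem_span_linForm_pow hθ hvan hspan,
    fun H => mem_span_linForm_pow_of_forall_diffAction_eq_zero (natCast_factorial_ne_zero hchar)
      hF fun θ hθ => H θ ⟨d, hθ⟩⟩

/-- The Apolarity Lemma (reduced case): if `F` is homogeneous of degree `d` over a field of
characteristic `0` or `> d`, and `ℓ₁, …, ℓ_r` are nonzero pairwise non-proportional linear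
forms with coefficient vectors `a 1, …, a r`, then `F` lies in the linear span of
`ℓ₁^d, …, ℓ_r^d` if and only if every homogeneous polynomial vanishing at all the points
`a i` annihilates `F`, i.e. the homogeneous vanishing ideal of the points is contained in
the apolar ideal `F^⊥`. -/
theorem apolarity_lemma {k : Type*} [Field k] {n d r : ℕ}
    (hchar : ringChar k = 0 ∨ d < ringChar k)
    (F : MvPolynomial (Fin n) k) (hF : F.IsHomogeneous d)
    (a : Fin r → Fin n → k) (hne : ∀ i, a i ≠ 0)
    (hprop : ∀ i j, i ≠ j → ∀ c : k, a i ≠ c • a j) :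
    F ∈ Submodule.span k (Set.range fun i => linForm (a i) ^ d) ↔
      ∀ θ : MvPolynomial (Fin n) k, (∃ e, θ.IsHomogeneous e) →
        (∀ i, eval (a i) θ = 0) → diffAction θ F = 0 :=
  apolarity_lemma_general hchar F hF a
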